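/- arXiv:1510.03285 — 6 statements merged into one kernel-verified Lean document; each statement's English description precedes it below -/
import Mathlib

section
/- Let a < b be real numbers, let f : ℝ → ℝ be continuously differentiable on [a,b], and let α₀ ∈ (0,1). If D^α_{*a} f(t) ≥ 0 for all t ∈ [a,b] and all α ∈ (α₀, 1), then f is monotone increasing on [a,b]. -/
/-- The Caputo fractional derivative of order `α` with starting point `a`:
`D^α_{*a} f(t) = (1/Γ(1-α)) ∫_a^t (t-s)^(-α) f'(s) ds`. -/
noncomputable def caputoDeriv (a α : ℝ) (f : ℝ → ℝ) (t : ℝ) : ℝ :=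
  (Real.Gamma (1 - α))⁻¹ * ∫ s in a..t, (t - s) ^ (-α) * deriv f s

/-!
Since `Γ(2 - α) = (1 - α) Γ(1 - α)`, we have
`D^α_{*a} f(t) = Γ(2 - α)⁻¹ ∫_a^t (1 - α) (t - s)^(-α) f'(s) ds`. As `α → 1⁻` the kernels
`(1 - α) (t - s)^(-α)` on `(a, t]` have total mass `(t - a)^(1 - α) → 1` and tend to zero uniformly
away from `t`, so they are peak functions at `t`; hence `D^α_{*a} f(t) → f'(t)`. Nonnegativity of
the Caputo derivatives for `α` near `1` therefore gives `f' ≥ 0` on `(a, b)`.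
-/

open Set Filter Topology MeasureTheory

theorem integral_sub_rpow_neg {a t α : ℝ} (hα : α < 1) :
    ∫ s in a..t, (t - s) ^ (-α) = (t - a) ^ (1 - α) / (1 - α) := by
  rw [intervalIntegral.integral_comp_sub_left (fun x : ℝ => x ^ (-α)), sub_self,
    integral_rpow (Or.inl (by linarith)), neg_add_eq_sub,
    Real.zero_rpow (by linarith : (1 : ℝ) - α ≠ 0), sub_zero]

theorem tendstoUniformlyOn_one_sub_mul_sub_rpow_neg {t δ : ℝ} (hδ : 0 < δ) :
    TendstoUniformlyOn (fun α x => (1 - α) * (t - x) ^ (-α)) 0 (𝓝[<] 1)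
      {x | x ≤ t - δ} := by
  have hbound : Tendsto (fun α : ℝ => (1 - α) * δ ^ (-α)) (𝓝[<] 1) (𝓝 0) := by
    have : Continuous fun α : ℝ => (1 - α) * δ ^ (-α) := by
      fun_prop (disch := exact hδ.ne')
    simpa using (this.tendsto 1).mono_left nhdsWithin_le_nhds
  rw [Metric.tendstoUniformlyOn_iff]
  intro ε hε
  filter_upwards [hbound.eventually (gt_mem_nhds hε), Ioo_mem_nhdsLT zero_lt_one]
    with α hαε ⟨hα₀, hα₁⟩ x (hx : x ≤ t - δ)
  have hpow : (t - x) ^ (-α) ≤ δ ^ (-α) :=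
    Real.rpow_le_rpow_of_nonpos hδ (by linarith) (by linarith)
  rw [Pi.zero_apply, dist_zero_left, Real.norm_of_nonneg
    (mul_nonneg (by linarith) (Real.rpow_nonneg (by linarith) _))]
  exact (mul_le_mul_of_nonneg_left hpow (by linarith)).trans_lt hαε

theorem tendsto_one_sub_mul_integral_sub_rpow_neg_mul {a t : ℝ} (hat : a < t) {g : ℝ → ℝ}
    (hg : IntegrableOn g (Ioc a t)) (hgt : ContinuousWithinAt g (Ioc a t) t) :
    Tendsto (fun α => (1 - α) * ∫ s in a..t, (t - s) ^ (-α) * g s) (𝓝[<] 1) (𝓝 (g t)) := by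
  have hmass : Tendsto (fun α : ℝ => ∫ x in Ioc a t, (1 - α) * (t - x) ^ (-α))
      (𝓝[<] 1) (𝓝 1) := by
    have hcont : Continuous fun α : ℝ => (t - a) ^ (1 - α) := by
      fun_prop (disch := exact (sub_pos.mpr hat).ne')
    refine ((hcont.tendsto 1).mono_left nhdsWithin_le_nhds).congr' ?_ |>.trans (by simp)
    filter_upwards [self_mem_nhdsWithin] with α (hα : α < 1)
    rw [integral_const_mul, ← intervalIntegral.integral_of_le hat.le,
      integral_sub_rpow_neg hα, mul_div_cancel₀ _ (by linarith : 1 - α ≠ 0)]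
  have hpeak : ∀ u : Set ℝ, IsOpen u → t ∈ u →
      TendstoUniformlyOn (fun α x => (1 - α) * (t - x) ^ (-α)) 0 (𝓝[<] 1) (Ioc a t \ u) := by
    intro u hu htu
    obtain ⟨δ, hδ, hball⟩ := Metric.isOpen_iff.mp hu t htu
    refine (tendstoUniformlyOn_one_sub_mul_sub_rpow_neg hδ).mono fun x ⟨hxs, hxu⟩ =>
      show x ≤ t - δ from not_lt.mp fun hx => hxu (hball ?_)
    rw [Metric.mem_ball, Real.dist_eq, abs_lt]
    constructor <;> linarith [hxs.2]
  have hnonneg : ∀ᶠ α in 𝓝[<] (1 : ℝ), ∀ x ∈ Ioc a t, 0 ≤ (1 - α) * (t - x) ^ (-α) := by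
    filter_upwards [self_mem_nhdsWithin] with α (hα : α < 1) x hx
    exact mul_nonneg (by linarith) (Real.rpow_nonneg (by linarith [hx.2]) _)
  have hmeas : ∀ᶠ α in 𝓝[<] (1 : ℝ),
      AEStronglyMeasurable (fun x => (1 - α) * (t - x) ^ (-α)) (volume.restrict (Ioc a t)) :=
    Eventually.of_forall fun α =>
      (((measurable_const.sub measurable_id).pow_const _).const_mul _).aestronglyMeasurable
  refine (tendsto_setIntegral_peak_smul_of_integrableOn_of_tendsto measurableSet_Ioc
    measurableSet_Ioc subset_rfl self_mem_nhdsWithin measure_Ioc_lt_top.ne hnonneg hpeak hmass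
    hmeas hg hgt).congr fun α => ?_
  simp only [smul_eq_mul, mul_assoc, integral_const_mul, intervalIntegral.integral_of_le hat.le]

theorem tendsto_caputoDeriv_nhdsLT_one {a t : ℝ} (hat : a < t) {f : ℝ → ℝ}
    (hf : IntegrableOn (deriv f) (Ioc a t)) (hft : ContinuousWithinAt (deriv f) (Ioc a t) t) :
    Tendsto (fun α => caputoDeriv a α f t) (𝓝[<] 1) (𝓝 (deriv f t)) := by
  have hΓ : Tendsto (fun α => (Real.Gamma (2 - α))⁻¹) (𝓝[<] 1) (𝓝 1) := by
    have hΓ1 : ContinuousAt Real.Gamma 1 := (Real.differentiableAt_Gamma fun m =>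
      ((neg_nonpos.mpr m.cast_nonneg).trans_lt one_pos).ne').continuousAt
    have h2α : Tendsto (fun α : ℝ => 2 - α) (𝓝[<] 1) (𝓝 1) :=
      ((continuous_const.sub continuous_id).tendsto' 1 1 (by norm_num)).mono_left
        nhdsWithin_le_nhds
    simpa [Real.Gamma_one] using (hΓ1.tendsto.comp h2α).inv₀ (by simp)
  refine ((hΓ.mul (tendsto_one_sub_mul_integral_sub_rpow_neg_mul hat hf hft)).congr' ?_).trans
    (by rw [one_mul])
  filter_upwards [self_mem_nhdsWithin] with α (hα : α < 1)
  have h1α : 1 - α ≠ 0 := by linarith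
  rw [caputoDeriv, show 2 - α = 1 - α + 1 by ring, Real.Gamma_add_one h1α, mul_inv,
    mul_mul_mul_comm, inv_mul_cancel₀ h1α, one_mul]

theorem ContDiffOn.integrableOn_deriv_Ioo {f : ℝ → ℝ} {a b : ℝ}
    (hf : ContDiffOn ℝ 1 f (Icc a b)) : IntegrableOn (deriv f) (Ioo a b) := by
  rcases le_or_gt b a with hba | hab
  · simp [Ioo_eq_empty_of_le hba]
  refine ((hf.continuousOn_derivWithin (uniqueDiffOn_Icc hab) le_rfl).integrableOn_Icc.mono_set
    Ioo_subset_Icc_self).congr_fun (fun x hx => ?_) measurableSet_Ioo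
  exact derivWithin_of_mem_nhds (Icc_mem_nhds hx.1 hx.2)

theorem monotoneOn_of_caputo_nonneg_general (a b : ℝ) (f : ℝ → ℝ)
    (hf : ContDiffOn ℝ 1 f (Set.Icc a b))
    (α₀ : ℝ) (hα₀ : α₀ ∈ Set.Ioo (0 : ℝ) 1)
    (h : ∀ t ∈ Set.Icc a b, ∀ α ∈ Set.Ioo α₀ 1, 0 ≤ caputoDeriv a α f t) :
    MonotoneOn f (Set.Icc a b) := by
  refine monotoneOn_of_deriv_nonneg (convex_Icc a b) hf.continuousOn
    ((hf.differentiableOn one_ne_zero).mono interior_subset) fun t ht => ?_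
  rw [interior_Icc] at ht
  have hcont : ContinuousAt (deriv f) t :=
    ((hf.mono Ioo_subset_Icc_self).continuousOn_deriv_of_isOpen isOpen_Ioo le_rfl).continuousAt
      (Ioo_mem_nhds ht.1 ht.2)
  refine ge_of_tendsto (tendsto_caputoDeriv_nhdsLT_one ht.1
    (hf.integrableOn_deriv_Ioo.mono_set (Ioc_subset_Ioo_right ht.2)) hcont.continuousWithinAt) ?_
  filter_upwards [Ioo_mem_nhdsLT hα₀.2] with α hα using h t (Ioo_subset_Icc_self ht) α hα

theorem monotoneOn_of_caputo_nonneg (a b : ℝ) (hab : a < b) (f : ℝ → ℝ)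
    (hf : ContDiffOn ℝ 1 f (Set.Icc a b))
    (α₀ : ℝ) (hα₀ : α₀ ∈ Set.Ioo (0 : ℝ) 1)
    (h : ∀ t ∈ Set.Icc a b, ∀ α ∈ Set.Ioo α₀ 1, 0 ≤ caputoDeriv a α f t) :
    MonotoneOn f (Set.Icc a b) :=
  monotoneOn_of_caputo_nonneg_general a b f hf α₀ hα₀ h
end

section
/- Let a < b be real numbers, let f : ℝ → ℝ be continuously differentiable on [a,b], and let α₀ ∈ (0,1). If D^α_{*a} f(t) ≤ 0 for all t ∈ [a,b] and all α ∈ (α₀, 1), then in fact D^α_{*a} f(t) ≤ 0 for all t ∈ [a,b] and all α ∈ (0, 1). -/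
open MeasureTheory intervalIntegral Set

lemma ker_intble (t α c d : ℝ) (hα : α < 1) :
    IntervalIntegrable (fun s => (t - s) ^ (-α)) volume c d := by
  have h := (intervalIntegrable_rpow' (a := t - c) (b := t - d)
    (r := -α) (by linarith)).comp_sub_left t
  simpa using h

lemma ker_integral (t α c d : ℝ) (hα : α < 1) :
    ∫ s in c..d, (t - s) ^ (-α) = ((t - c) ^ (1 - α) - (t - d) ^ (1 - α)) / (1 - α) := by
  rw [show (∫ s in c..d, (t - s) ^ (-α))
      = ∫ u in (t - d)..(t - c), u ^ (-α) from
    intervalIntegral.integral_comp_sub_left (fun u : ℝ => u ^ (-α)) t]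
  rw [integral_rpow (Or.inl (by linarith)), show -α + 1 = 1 - α by ring]

lemma prod_intble (t α c d M : ℝ) (hα : α < 1) (hcd : c ≤ d) (hdt : d ≤ t)
    (g : ℝ → ℝ) (hg : ContinuousOn g (Set.Ioc c d))
    (hM : ∀ s ∈ Set.Ioc c d, |g s| ≤ M) :
    IntervalIntegrable (fun s => (t - s) ^ (-α) * g s) volume c d := by
  rw [intervalIntegrable_iff_integrableOn_Ioc_of_le hcd]
  have hker : IntegrableOn (fun s => M * (t - s) ^ (-α)) (Set.Ioc c d) volume := by
    have := ((ker_intble t α c d hα).const_mul M)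
    rwa [intervalIntegrable_iff_integrableOn_Ioc_of_le hcd] at this
  apply Integrable.mono' hker
  · exact (((measurable_const.sub measurable_id).pow measurable_const).aestronglyMeasurable).mul
      (hg.aestronglyMeasurable measurableSet_Ioc)
  · rw [ae_restrict_iff' measurableSet_Ioc]
    filter_upwards with s hs
    have h1 : (0:ℝ) ≤ (t - s) ^ (-α) := Real.rpow_nonneg (by linarith [hs.2]) _
    have h2 := hM s hs
    rw [Real.norm_eq_abs, abs_mul, abs_of_nonneg h1, mul_comm M]
    exact mul_le_mul_of_nonneg_left h2 h1

theorem caputo_nonpos_extend (a b : ℝ) (hab : a < b) (f : ℝ → ℝ)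
    (hf : ContDiffOn ℝ 1 f (Set.Icc a b))
    (α₀ : ℝ) (hα₀ : α₀ ∈ Set.Ioo (0 : ℝ) 1)
    (h : ∀ t ∈ Set.Icc a b, ∀ α ∈ Set.Ioo α₀ 1, caputoDeriv a α f t ≤ 0) :
    ∀ t ∈ Set.Icc a b, ∀ α ∈ Set.Ioo (0 : ℝ) 1, caputoDeriv a α f t ≤ 0 := by
  set g := derivWithin f (Set.Icc a b) with hgdef
  have hgc : ContinuousOn g (Set.Icc a b) :=
    hf.continuousOn_derivWithin (uniqueDiffOn_Icc hab) le_rfl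
  have hderiv_eq : ∀ s ∈ Set.Ioo a b, deriv f s = g s := fun s hs =>
    (derivWithin_of_mem_nhds (Icc_mem_nhds hs.1 hs.2)).symm
  -- bound for g
  obtain ⟨C, hC⟩ := (isCompact_Icc (a := a) (b := b)).exists_bound_of_continuousOn hgc
  set M : ℝ := max C 1 with hMdef
  have hM1 : (0:ℝ) < M := lt_of_lt_of_le one_pos (le_max_right _ _)
  have hMg : ∀ s ∈ Set.Icc a b, |g s| ≤ M := fun s hs =>
    le_trans (by simpa using hC s hs) (le_max_left _ _)
  -- key claim : g ≤ 0 on the open interval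
  have key : ∀ s ∈ Set.Ioo a b, g s ≤ 0 := by
    by_contra hpos
    push_neg at hpos
    obtain ⟨s₀, hs₀, hgs₀⟩ := hpos
    set c : ℝ := g s₀ / 2 with hcdef
    have hc : 0 < c := by positivity
    have hev : ∀ᶠ s in nhds s₀, c < g s ∧ s ∈ Set.Ioo a b := by
      have h1 : ∀ᶠ s in nhds s₀, c < g s := by
        have hct : ContinuousAt g s₀ :=
          hgc.continuousAt (Icc_mem_nhds hs₀.1 hs₀.2)
        exact hct.eventually (lt_mem_nhds (by linarith))
      exact h1.and (isOpen_Ioo.eventually_mem hs₀)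
    rw [Metric.eventually_nhds_iff] at hev
    obtain ⟨ε, hε, hball⟩ := hev
    set δ : ℝ := ε / 2 with hδdef
    have hδ : 0 < δ := by positivity
    set r : ℝ := s₀ - δ with hrdef
    set t : ℝ := s₀ + δ with htdef
    have hIcc : ∀ s ∈ Set.Icc r t, c < g s ∧ s ∈ Set.Ioo a b := by
      intro s hs
      apply hball
      rw [Real.dist_eq, abs_sub_lt_iff]
      constructor <;> linarith [hs.1, hs.2]
    have har : a < r := (hIcc r ⟨le_refl r, by linarith⟩).2.1
    have hrt : r < t := by simp only [hrdef, htdef]; linarith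
    have htb : t < b := (hIcc t ⟨by linarith, le_refl t⟩).2.2
    -- choose α
    set φ : ℝ → ℝ := fun β => (c + M) * (t - r) ^ (1 - β) - M * (t - a) ^ (1 - β) with hφdef
    have hφ1 : φ 1 = c := by
      simp [hφdef, Real.rpow_zero]
    have hφcont : ContinuousAt φ 1 := by
      apply ContinuousAt.sub
      · exact continuousAt_const.mul
          ((Real.continuousAt_const_rpow (by linarith : t - r ≠ 0)).comp
            (continuousAt_const.sub continuousAt_id))
      · exact continuousAt_const.mul
          ((Real.continuousAt_const_rpow (by linarith : t - a ≠ 0)).comp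
            (continuousAt_const.sub continuousAt_id))
    have hevφ : ∀ᶠ β in nhds (1:ℝ), 0 < φ β :=
      hφcont.eventually (lt_mem_nhds (by rw [hφ1]; exact hc))
    have hevα : ∀ᶠ β in nhdsWithin (1:ℝ) (Set.Iio 1), 0 < φ β ∧ β ∈ Set.Ioo α₀ 1 :=
      (hevφ.filter_mono nhdsWithin_le_nhds).and
        (Filter.eventually_of_mem (Ioo_mem_nhdsLT_of_mem ⟨hα₀.2, le_refl 1⟩) (fun x hx => hx))
    obtain ⟨α, hφα, hαmem⟩ := hevα.exists
    have hα1 : α < 1 := hαmem.2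
    have hα0 : 0 < α := lt_trans hα₀.1 hαmem.1
    have hat : a < t := by linarith
    have hta : t ∈ Set.Icc a b := ⟨le_of_lt hat, le_of_lt htb⟩
    have hcap := h t hta α hαmem
    unfold caputoDeriv at hcap
    -- replace deriv f by g inside the integral
    have hcongr : (∫ s in a..t, (t - s) ^ (-α) * deriv f s)
        = ∫ s in a..t, (t - s) ^ (-α) * g s := by
      apply intervalIntegral.integral_congr_ae
      apply Filter.Eventually.of_forall
      intro x hx
      rw [Set.uIoc_of_le (le_of_lt hat)] at hx
      rw [hderiv_eq x ⟨hx.1, lt_of_le_of_lt hx.2 htb⟩]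
    -- integrability pieces
    have hint1 : IntervalIntegrable (fun s => (t - s) ^ (-α) * g s) volume a r :=
      prod_intble t α a r M hα1 (le_of_lt har) (by linarith) g
        (hgc.mono (fun x hx => ⟨le_of_lt hx.1, by linarith [hx.2]⟩))
        (fun s hs => hMg s ⟨le_of_lt hs.1, by linarith [hs.2]⟩)
    have hint2 : IntervalIntegrable (fun s => (t - s) ^ (-α) * g s) volume r t :=
      prod_intble t α r t M hα1 (le_of_lt hrt) le_rfl g
        (hgc.mono (fun x hx => ⟨by linarith [hx.1], by linarith [hx.2]⟩))
        (fun s hs => hMg s ⟨by linarith [hs.1], by linarith [hs.2]⟩)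
    have hsplit := intervalIntegral.integral_add_adjacent_intervals hint1 hint2
    -- lower bound on [r,t]
    have hLB2 : (c * ((t - r) ^ (1 - α)) / (1 - α))
        ≤ ∫ s in r..t, (t - s) ^ (-α) * g s := by
      have hmon : (∫ s in r..t, (t - s) ^ (-α) * c)
          ≤ ∫ s in r..t, (t - s) ^ (-α) * g s := by
        apply intervalIntegral.integral_mono_on (le_of_lt hrt)
          ((ker_intble t α r t hα1).mul_const c) hint2
        intro s hs
        have hker : (0:ℝ) ≤ (t - s) ^ (-α) := Real.rpow_nonneg (by linarith [hs.2]) _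
        exact mul_le_mul_of_nonneg_left (le_of_lt (hIcc s hs).1) hker
      calc c * ((t - r) ^ (1 - α)) / (1 - α)
          = ((t - r) ^ (1 - α) - (t - t) ^ (1 - α)) / (1 - α) * c := by
            rw [sub_self, Real.zero_rpow (by linarith)]; ring
        _ = ∫ s in r..t, (t - s) ^ (-α) * c := by
            rw [intervalIntegral.integral_mul_const, ker_integral t α r t hα1]
        _ ≤ _ := hmon
    -- lower bound on [a,r]
    have hLB1 : (-M) * ((t - a) ^ (1 - α) - (t - r) ^ (1 - α)) / (1 - α)
        ≤ ∫ s in a..r, (t - s) ^ (-α) * g s := by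
      have hmon : (∫ s in a..r, (t - s) ^ (-α) * (-M))
          ≤ ∫ s in a..r, (t - s) ^ (-α) * g s := by
        apply intervalIntegral.integral_mono_on (le_of_lt har)
          ((ker_intble t α a r hα1).mul_const (-M)) hint1
        intro s hs
        have hker : (0:ℝ) ≤ (t - s) ^ (-α) := Real.rpow_nonneg (by linarith [hs.2]) _
        have hgs : -M ≤ g s := by
          have := hMg s ⟨hs.1, by linarith [hs.2]⟩
          have := neg_abs_le (g s); linarith
        exact mul_le_mul_of_nonneg_left hgs hker
      calc (-M) * ((t - a) ^ (1 - α) - (t - r) ^ (1 - α)) / (1 - α)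
          = ((t - a) ^ (1 - α) - (t - r) ^ (1 - α)) / (1 - α) * (-M) := by ring
        _ = ∫ s in a..r, (t - s) ^ (-α) * (-M) := by
            rw [intervalIntegral.integral_mul_const, ker_integral t α a r hα1]
        _ ≤ _ := hmon
    -- combine
    have h1α : (0:ℝ) < 1 - α := by linarith
    have hIpos : 0 < ∫ s in a..t, (t - s) ^ (-α) * g s := by
      rw [← hsplit]
      have hφα' : 0 < φ α / (1 - α) := div_pos hφα h1α
      have : φ α / (1 - α) = c * ((t - r) ^ (1 - α)) / (1 - α)
          + (-M) * ((t - a) ^ (1 - α) - (t - r) ^ (1 - α)) / (1 - α) := by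
        simp only [hφdef]; ring
      linarith [hLB1, hLB2]
    have hΓ : 0 < (Real.Gamma (1 - α))⁻¹ :=
      inv_pos.mpr (Real.Gamma_pos_of_pos (by linarith))
    rw [hcongr] at hcap
    nlinarith [mul_pos hΓ hIpos]
  -- conclusion
  intro t ht α hα
  unfold caputoDeriv
  rcases eq_or_lt_of_le ht.1 with heq | hlt
  · rw [← heq, intervalIntegral.integral_same, mul_zero]
  · have hΓ : 0 ≤ (Real.Gamma (1 - α))⁻¹ :=
      (inv_pos.mpr (Real.Gamma_pos_of_pos (by linarith [hα.2]))).le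
    have hI : (∫ s in a..t, (t - s) ^ (-α) * deriv f s) ≤ 0 := by
      have hcongr : (∫ s in a..t, (t - s) ^ (-α) * deriv f s)
          = ∫ s in a..t, (t - s) ^ (-α) * g s := by
        apply intervalIntegral.integral_congr_ae
        apply Filter.Eventually.of_forall
        intro x hx
        rw [Set.uIoc_of_le (le_of_lt hlt)] at hx
        by_cases hxt : x < t
        · rw [hderiv_eq x ⟨hx.1, lt_of_lt_of_le hxt ht.2⟩]
        · have hxe : t - x = 0 := by
            have : x = t := le_antisymm hx.2 (not_lt.mp hxt)
            rw [this, sub_self]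
          rw [hxe, Real.zero_rpow (by linarith [hα.1] : -α ≠ 0), zero_mul, zero_mul]
      rw [hcongr, intervalIntegral.integral_of_le (le_of_lt hlt)]
      have hnonpos : ∀ x ∈ Set.Ioc a t, (t - x) ^ (-α) * g x ≤ 0 := by
        intro x hx
        by_cases hxt : x < t
        · exact mul_nonpos_of_nonneg_of_nonpos
            (Real.rpow_nonneg (by linarith [hx.2]) _)
            (key x ⟨hx.1, lt_of_lt_of_le hxt ht.2⟩)
        · have hxe : t - x = 0 := by
            have : x = t := le_antisymm hx.2 (not_lt.mp hxt)
            rw [this, sub_self]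
          rw [hxe, Real.zero_rpow (by linarith [hα.1] : -α ≠ 0), zero_mul]
      have hneg := setIntegral_nonneg (μ := volume) measurableSet_Ioc
        (fun x hx => neg_nonneg.mpr (hnonpos x hx))
      rw [MeasureTheory.integral_neg] at hneg
      linarith
    exact mul_nonpos_of_nonneg_of_nonpos hΓ hI
end

section
/- Let a < b be real numbers, let g : ℝ → ℝ be continuous on [a,b], and let t ∈ (a,b]. Then the Riemann–Liouville fractional integral J^β_a g(t) = (1/Γ(β)) ∫_a^t (t-s)^{β-1} g(s) ds converges to g(t) as β → 0 from the right. -/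
/-!
As `β → 0⁺`, the kernels `s ↦ (t - s) ^ (β - 1) / Γ(β)` on `(a, t]` form an approximate identity
at `t`: their total mass `(t - a) ^ β / Γ(β + 1)` tends to `1`, and on `s ≤ t - δ` they are
bounded by `δ ^ (β - 1) / Γ(β)`, which tends to `0` because `1 / Γ` is continuous and vanishes
at `0`. Integrating a function continuous at `t` against them therefore recovers its value at `t`.
-/

/-- The Riemann–Liouville fractional integral of order `β` with starting point `a`:
`J^β_a g(t) = (1/Γ(β)) ∫_a^t (t-s)^(β-1) g(s) ds`. -/
noncomputable def rlIntegral (a β : ℝ) (g : ℝ → ℝ) (t : ℝ) : ℝ :=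
  (Real.Gamma β)⁻¹ * ∫ s in a..t, (t - s) ^ (β - 1) * g s

open MeasureTheory Filter Set Topology

theorem Real.continuous_inv_Gamma : Continuous fun β : ℝ => (Real.Gamma β)⁻¹ := by
  have h := Complex.continuous_re.comp
    (Complex.differentiable_one_div_Gamma.continuous.comp Complex.continuous_ofReal)
  convert h using 2 with β
  simp [Complex.Gamma_ofReal, ← Complex.ofReal_inv]

noncomputable def rlKernel (β t s : ℝ) : ℝ :=
  (Real.Gamma β)⁻¹ * (t - s) ^ (β - 1)

section rlKernel

variable {β t : ℝ}

theorem rlIntegral_eq_setIntegral_rlKernel {a : ℝ} (g : ℝ → ℝ) (ha : a ≤ t) :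
    rlIntegral a β g t = ∫ s in Ioc a t, rlKernel β t s * g s := by
  simp only [rlIntegral, rlKernel, intervalIntegral.integral_of_le ha, mul_assoc,
    integral_const_mul]

theorem rlKernel_nonneg (hβ : 0 ≤ β) {s : ℝ} (hs : s ≤ t) : 0 ≤ rlKernel β t s :=
  mul_nonneg (inv_nonneg.2 (Real.Gamma_nonneg_of_nonneg hβ))
    (Real.rpow_nonneg (sub_nonneg.2 hs) _)

theorem rlKernel_le (hβ : 0 ≤ β) (hβ1 : β ≤ 1) {δ s : ℝ} (hδ : 0 < δ) (hs : s ≤ t - δ) :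
    rlKernel β t s ≤ (Real.Gamma β)⁻¹ * δ ^ (β - 1) :=
  mul_le_mul_of_nonneg_left (Real.rpow_le_rpow_of_nonpos hδ (by linarith) (by linarith))
    (inv_nonneg.2 (Real.Gamma_nonneg_of_nonneg hβ))

theorem measurable_rlKernel : Measurable (rlKernel β t) := by
  unfold rlKernel; fun_prop

theorem integral_rlKernel (hβ : 0 < β) {a : ℝ} (ha : a ≤ t) :
    ∫ s in Ioc a t, rlKernel β t s = (t - a) ^ β * (Real.Gamma (β + 1))⁻¹ := by
  rw [← intervalIntegral.integral_of_le ha]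
  simp only [rlKernel, intervalIntegral.integral_const_mul]
  rw [intervalIntegral.integral_comp_sub_left (fun x => x ^ (β - 1)) t, sub_self,
    integral_rpow (Or.inl (by linarith)), sub_add_cancel, Real.zero_rpow hβ.ne', sub_zero,
    Real.Gamma_add_one hβ.ne']
  field_simp

theorem tendstoUniformlyOn_rlKernel {δ : ℝ} (hδ : 0 < δ) :
    TendstoUniformlyOn (fun β => rlKernel β t) 0 (𝓝[>] 0) (Iic (t - δ)) := by
  have hbound : Tendsto (fun β => (Real.Gamma β)⁻¹ * δ ^ (β - 1)) (𝓝[>] 0) (𝓝 0) := by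
    have hcont : Continuous fun β => (Real.Gamma β)⁻¹ * δ ^ (β - 1) :=
      Real.continuous_inv_Gamma.mul
        (continuous_const.rpow (continuous_id.sub continuous_const) fun _ => Or.inl hδ.ne')
    simpa using (hcont.tendsto 0).mono_left nhdsWithin_le_nhds
  refine Metric.tendstoUniformlyOn_iff.2 fun ε hε => ?_
  filter_upwards [(tendsto_order.1 hbound).2 ε hε, Ioo_mem_nhdsGT one_pos]
    with β hβε ⟨hβ0, hβ1⟩ s hs
  rw [Pi.zero_apply, dist_zero_left, Real.norm_of_nonneg
    (rlKernel_nonneg hβ0.le (by linarith [mem_Iic.1 hs]))]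
  exact (rlKernel_le hβ0.le hβ1.le hδ hs).trans_lt hβε

theorem tendsto_integral_rlKernel {a : ℝ} (hat : a < t) :
    Tendsto (fun β => ∫ s in Ioc a t, rlKernel β t s) (𝓝[>] 0) (𝓝 1) := by
  have hcont : Continuous fun β => (t - a) ^ β * (Real.Gamma (β + 1))⁻¹ :=
    (continuous_const.rpow continuous_id fun _ => Or.inl (sub_pos.2 hat).ne').mul
      (Real.continuous_inv_Gamma.comp (continuous_id.add continuous_const))
  have h := hcont.tendsto 0
  simp only [Real.rpow_zero, zero_add, Real.Gamma_one, inv_one, mul_one] at h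
  exact (h.mono_left nhdsWithin_le_nhds).congr'
    (eventually_nhdsWithin_of_forall fun β hβ => (integral_rlKernel hβ hat.le).symm)

theorem tendsto_setIntegral_rlKernel_smul {E : Type*} [NormedAddCommGroup E] [NormedSpace ℝ E]
    [CompleteSpace E] {a : ℝ} (hat : a < t) {g : ℝ → E} {c : E} (hg : IntegrableOn g (Ioc a t))
    (hgc : Tendsto g (𝓝[Ioc a t] t) (𝓝 c)) :
    Tendsto (fun β => ∫ s in Ioc a t, rlKernel β t s • g s) (𝓝[>] 0) (𝓝 c) := by
  refine tendsto_setIntegral_peak_smul_of_integrableOn_of_tendsto measurableSet_Ioc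
    measurableSet_Ioc subset_rfl self_mem_nhdsWithin measure_Ioc_lt_top.ne ?_ ?_
    (tendsto_integral_rlKernel hat)
    (Eventually.of_forall fun _ => measurable_rlKernel.aestronglyMeasurable) hg hgc
  · filter_upwards [self_mem_nhdsWithin] with β hβ s hs using rlKernel_nonneg (le_of_lt hβ) hs.2
  · intro u hu htu
    obtain ⟨δ, hδ, hball⟩ := Metric.isOpen_iff.1 hu t htu
    refine (tendstoUniformlyOn_rlKernel hδ).mono fun s ⟨hs, hsu⟩ => ?_
    have hδs : δ ≤ dist s t := not_lt.1 fun h => hsu (hball h)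
    rw [Real.dist_eq, abs_of_nonpos (sub_nonpos.2 hs.2)] at hδs
    exact mem_Iic.2 (by linarith)

end rlKernel

theorem rlIntegral_tendsto_self_general (a b : ℝ) (g : ℝ → ℝ)
    (hg : ContinuousOn g (Set.Icc a b)) (t : ℝ) (ht : t ∈ Set.Ioc a b) :
    Filter.Tendsto (fun β => rlIntegral a β g t)
      (nhdsWithin 0 (Set.Ioi 0)) (nhds (g t)) := by
  have hgt : ContinuousOn g (Icc a t) := hg.mono (Icc_subset_Icc_right ht.2)
  have hlim := tendsto_setIntegral_rlKernel_smul ht.1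
    (hgt.integrableOn_Icc.mono_set Ioc_subset_Icc_self)
    ((hgt t (right_mem_Icc.2 ht.1.le)).mono Ioc_subset_Icc_self)
  simpa only [rlIntegral_eq_setIntegral_rlKernel g ht.1.le, smul_eq_mul] using hlim

theorem rlIntegral_tendsto_self (a b : ℝ) (hab : a < b) (g : ℝ → ℝ)
    (hg : ContinuousOn g (Set.Icc a b)) (t : ℝ) (ht : t ∈ Set.Ioc a b) :
    Filter.Tendsto (fun β => rlIntegral a β g t)
      (nhdsWithin 0 (Set.Ioi 0)) (nhds (g t)) :=
  rlIntegral_tendsto_self_general a b g hg t ht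
end

section
/- Let a < b be real numbers and let f : ℝ → ℝ be continuously differentiable on [a,b]. If f attains a global maximum over [a,b] at some interior point t* ∈ (a,b), then D^α_{*a} f(t*) ≥ 0 for all α ∈ (0,1). -/
/-!
Write `g = f - f t*`, which is `≤ 0` on `[a, b]`. For `a < c < t*`, integrating by parts against
the kernel `(t* - s)^(-α)`, whose derivative `α (t* - s)^(-α-1)` is nonnegative, gives
`∫_a^c (t* - s)^(-α) f'(s) ds ≥ (t* - c)^(-α) g(c)`: the boundary term at `a` and the remaining
integral both have the sign of `-g`. Since `f` is differentiable at `t*`, `g(c) = O(t* - c)`, so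
this lower bound is `O((t* - c)^(1-α)) → 0` as `c → t*⁻`. The left side tends to the full
integral, whose integrand is integrable because `f'` is bounded and `α < 1`; finally
`Γ(1 - α) > 0`.
-/

open Set MeasureTheory Filter Topology Asymptotics Interval

theorem IntervalIntegrable.mul_of_forall_norm_le {𝕜 : Type*} [NormedRing 𝕜] {ψ φ : ℝ → 𝕜}
    {a b M : ℝ} (hψ : IntervalIntegrable ψ volume a b) (hφ : AEStronglyMeasurable φ)
    (hφM : ∀ s ∈ Ι a b, ‖φ s‖ ≤ M) : IntervalIntegrable (fun s => ψ s * φ s) volume a b :=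
  intervalIntegrable_iff.2 <| (intervalIntegrable_iff.1 hψ).mul_bdd hφ.restrict
    (ae_restrict_of_forall_mem measurableSet_uIoc hφM)

theorem IntervalIntegrable.le_integral_of_tendsto_nhdsLT {μ : Measure ℝ} [NullSingletonClass μ]
    {φ L : ℝ → ℝ} {a t l : ℝ} (hφ : IntervalIntegrable φ μ a t) (hat : a < t)
    (hL : Tendsto L (𝓝[<] t) (𝓝 l)) (hle : ∀ᶠ c in 𝓝[<] t, L c ≤ ∫ s in a..c, φ s ∂μ) :
    l ≤ ∫ s in a..t, φ s ∂μ := by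
  have hcont := intervalIntegral.continuousOn_primitive_interval' hφ left_mem_uIcc t right_mem_uIcc
  have hmem : uIcc a t ∈ 𝓝[<] t :=
    mem_of_superset (Ioo_mem_nhdsLT hat) (Ioo_subset_Icc_self.trans Icc_subset_uIcc)
  exact le_of_tendsto_of_tendsto hL (hcont.mono_of_mem_nhdsWithin hmem).tendsto hle

section FractionalKernel

variable {t α : ℝ}

theorem intervalIntegrable_sub_rpow_neg (hα : α < 1) (x y : ℝ) :
    IntervalIntegrable (fun s => (t - s) ^ (-α)) volume x y := by
  simpa using (intervalIntegral.intervalIntegrable_rpow' (r := -α) (by linarith)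
    (a := t - x) (b := t - y)).comp_sub_left t

theorem tendsto_sub_rpow_neg_mul_sub_nhdsLT {g : ℝ → ℝ} (hα : α < 1)
    (hg : DifferentiableAt ℝ g t) :
    Tendsto (fun c => (t - c) ^ (-α) * (g c - g t)) (𝓝[<] t) (𝓝 0) := by
  have hpow : Tendsto (fun c => (t - c) ^ (1 - α)) (𝓝[<] t) (𝓝 0) := by
    have := ((continuous_const.sub continuous_id).rpow_const (f := fun c : ℝ => t - c)
      (fun _ => Or.inr (by linarith : 0 ≤ 1 - α))).tendsto t
    simp only [sub_self, Real.zero_rpow (by linarith : 1 - α ≠ 0)] at this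
    exact this.mono_left nhdsWithin_le_nhds
  have hkernel : (fun c => (t - c) ^ (-α) * (c - t)) =ᶠ[𝓝[<] t] fun c => -(t - c) ^ (1 - α) := by
    filter_upwards [self_mem_nhdsWithin] with c hc
    have hc : 0 < t - c := sub_pos.2 hc
    rw [sub_eq_add_neg 1 α, add_comm, Real.rpow_add hc, Real.rpow_one]
    ring
  refine (((isBigO_refl _ _).mul (hg.isBigO_sub.mono nhdsWithin_le_nhds)).trans_tendsto ?_)
  simpa using (hpow.neg.congr' hkernel.symm)

theorem sub_rpow_neg_mul_le_integral_mul_deriv {g g' : ℝ → ℝ} {a c : ℝ} (hα : 0 ≤ α)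
    (hac : a ≤ c) (hct : c < t) (hg : ContinuousOn g (Icc a c))
    (hg' : ∀ s ∈ Ioo a c, HasDerivAt g (g' s) s) (hg'int : IntervalIntegrable g' volume a c)
    (hg_nonpos : ∀ s ∈ Icc a c, g s ≤ 0) :
    (t - c) ^ (-α) * g c ≤ ∫ s in a..c, (t - s) ^ (-α) * g' s := by
  have hbase : ∀ s ∈ Icc a c, 0 < t - s := fun s hs => sub_pos.2 (hs.2.trans_lt hct)
  have hu : ContinuousOn (fun s => (t - s) ^ (-α)) (Icc a c) :=
    (continuousOn_const.sub continuousOn_id).rpow_const fun s hs => Or.inl (hbase s hs).ne'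
  have hu'cont : ContinuousOn (fun s => α * (t - s) ^ (-α - 1)) (Icc a c) :=
    continuousOn_const.mul <|
      (continuousOn_const.sub continuousOn_id).rpow_const fun s hs => Or.inl (hbase s hs).ne'
  have hu' : ∀ s ∈ Ioo a c, HasDerivAt (fun s => (t - s) ^ (-α)) (α * (t - s) ^ (-α - 1)) s :=
    fun s hs => (((hasDerivAt_id s).const_sub t).rpow_const
      (Or.inl (hbase s (Ioo_subset_Icc_self hs)).ne')).congr_deriv (by simp)
  have hparts := intervalIntegral.integral_mul_deriv_eq_deriv_mul_of_hasDerivAt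
    (u := fun s => (t - s) ^ (-α)) (v := g) (by rwa [uIcc_of_le hac]) (by rwa [uIcc_of_le hac])
    (by rwa [min_eq_left hac, max_eq_right hac])
    (by rwa [min_eq_left hac, max_eq_right hac])
    (hu'cont.intervalIntegrable_of_Icc hac) hg'int
  have hleft : (t - a) ^ (-α) * g a ≤ 0 :=
    mul_nonpos_of_nonneg_of_nonpos (Real.rpow_nonneg (hbase a (left_mem_Icc.2 hac)).le _)
      (hg_nonpos a (left_mem_Icc.2 hac))
  have hmiddle : (∫ s in a..c, α * (t - s) ^ (-α - 1) * g s) ≤ 0 := by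
    simpa using intervalIntegral.integral_mono_on hac
      ((hu'cont.mul hg).intervalIntegrable_of_Icc hac) intervalIntegrable_const
      fun s hs => mul_nonpos_of_nonneg_of_nonpos
        (mul_nonneg hα (Real.rpow_nonneg (hbase s hs).le _)) (hg_nonpos s hs)
  rw [hparts]
  linarith

end FractionalKernel

theorem ContDiffOn.exists_forall_abs_deriv_le {f : ℝ → ℝ} {a b : ℝ} (hab : a < b)
    (hf : ContDiffOn ℝ 1 f (Icc a b)) : ∃ M, ∀ s ∈ Ioo a b, |deriv f s| ≤ M := by
  obtain ⟨M, hM⟩ := isCompact_Icc.exists_bound_of_continuousOn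
    (hf.continuousOn_derivWithin (uniqueDiffOn_Icc hab) le_rfl)
  refine ⟨M, fun s hs => ?_⟩
  rw [← derivWithin_of_mem_nhds (Icc_mem_nhds hs.1 hs.2)]
  exact hM s (Ioo_subset_Icc_self hs)

theorem caputo_nonneg_at_global_max (a b : ℝ) (hab : a < b) (f : ℝ → ℝ)
    (hf : ContDiffOn ℝ 1 f (Set.Icc a b))
    (tstar : ℝ) (htstar : tstar ∈ Set.Ioo a b)
    (hmax : ∀ t ∈ Set.Icc a b, f t ≤ f tstar) :
    ∀ α ∈ Set.Ioo (0 : ℝ) 1, 0 ≤ caputoDeriv a α f tstar := by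
  rintro α ⟨hα0, hα1⟩
  obtain ⟨hat, htb⟩ := htstar
  have hderiv : ∀ s ∈ Ioo a b, HasDerivAt f (deriv f s) s := fun s hs =>
    ((hf.differentiableOn one_ne_zero s (Ioo_subset_Icc_self hs)).differentiableAt
      (Icc_mem_nhds hs.1 hs.2)).hasDerivAt
  obtain ⟨M, hM⟩ := hf.exists_forall_abs_deriv_le hab
  have hM' : ∀ s ∈ Ι a tstar, ‖deriv f s‖ ≤ M := fun s hs => by
    rw [uIoc_of_le hat.le] at hs
    exact hM s ⟨hs.1, hs.2.trans_lt htb⟩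
  have hmeas : AEStronglyMeasurable (deriv f) := (measurable_deriv f).aestronglyMeasurable
  have hint : IntervalIntegrable (fun s => (tstar - s) ^ (-α) * deriv f s) volume a tstar :=
    (intervalIntegrable_sub_rpow_neg hα1 a tstar).mul_of_forall_norm_le hmeas hM'
  have hderiv_int : IntervalIntegrable (deriv f) volume a tstar := by
    simpa using (intervalIntegrable_const (c := (1 : ℝ))).mul_of_forall_norm_le hmeas hM'
  refine mul_nonneg (inv_nonneg.2 (Real.Gamma_pos_of_pos (by linarith)).le) ?_
  refine hint.le_integral_of_tendsto_nhdsLT hat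
    (tendsto_sub_rpow_neg_mul_sub_nhdsLT hα1 (hderiv tstar ⟨hat, htb⟩).differentiableAt) ?_
  filter_upwards [Ioo_mem_nhdsLT hat] with c ⟨hac, hct⟩
  exact sub_rpow_neg_mul_le_integral_mul_deriv hα0.le hac.le hct
    ((hf.continuousOn.mono (Icc_subset_Icc_right (hct.trans htb).le)).sub continuousOn_const)
    (fun s hs => (hderiv s ⟨hs.1, hs.2.trans (hct.trans htb)⟩).sub_const _)
    (hderiv_int.mono_set (uIcc_subset_uIcc_left (Icc_subset_uIcc ⟨hac.le, hct.le⟩)))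
    (fun s hs => sub_nonpos.2 (hmax s ⟨hs.1, hs.2.trans (hct.trans htb).le⟩))
end

section
/- Define t₂(α) = (3 - α - √((3-α)(1+α)/3))/4. Then t₂ is strictly decreasing on the interval (0,1); in particular, for 0 < α₁ < α₂ < 1 one has 1/2 = t₂(0) > t₂(α₁) > t₂(α₂) > t₂(1) = (3-√3)/6. -/
/-- The smaller positive zero of the quadratic factor appearing in the Caputo
derivative of order `α` of `g(t) = t³ - (3/2)t² + (1/2)t`. -/
noncomputable def t2 (α : ℝ) : ℝ :=
  (3 - α - Real.sqrt ((3 - α) * (1 + α) / 3)) / 4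

lemma t2_anti_Icc : StrictAntiOn t2 (Set.Icc (0 : ℝ) 1) := by
  intro a ha b hb hab
  obtain ⟨ha0, ha1⟩ := ha
  obtain ⟨hb0, hb1⟩ := hb
  have hf : (3 - a) * (1 + a) / 3 ≤ (3 - b) * (1 + b) / 3 := by nlinarith
  have hs : Real.sqrt ((3 - a) * (1 + a) / 3) ≤ Real.sqrt ((3 - b) * (1 + b) / 3) :=
    Real.sqrt_le_sqrt hf
  unfold t2
  linarith

lemma t2_zero : t2 0 = 1 / 2 := by
  unfold t2
  norm_num

lemma t2_one : t2 1 = (3 - Real.sqrt 3) / 6 := by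
  unfold t2
  have h3 : Real.sqrt 3 ≥ 0 := Real.sqrt_nonneg 3
  have : Real.sqrt ((3 - 1) * (1 + 1) / 3) = 2 * Real.sqrt 3 / 3 := by
    rw [show ((3:ℝ) - 1) * (1 + 1) / 3 = (2 * Real.sqrt 3 / 3) ^ 2 by
      rw [div_pow, mul_pow, Real.sq_sqrt (by norm_num : (3:ℝ) ≥ 0)]; norm_num]
    exact Real.sqrt_sq (by positivity)
  rw [this]
  ring

theorem t2_strictAnti :
    StrictAntiOn t2 (Set.Ioo (0 : ℝ) 1) ∧
    t2 0 = 1 / 2 ∧ t2 1 = (3 - Real.sqrt 3) / 6 ∧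
    ∀ α₁ α₂ : ℝ, 0 < α₁ → α₁ < α₂ → α₂ < 1 →
      t2 0 > t2 α₁ ∧ t2 α₁ > t2 α₂ ∧ t2 α₂ > t2 1 := by
  refine ⟨t2_anti_Icc.mono Set.Ioo_subset_Icc_self, t2_zero, t2_one, ?_⟩
  intro α₁ α₂ h1 h12 h2
  have m0 : (0:ℝ) ∈ Set.Icc (0:ℝ) 1 := by constructor <;> norm_num
  have m1 : (1:ℝ) ∈ Set.Icc (0:ℝ) 1 := by constructor <;> norm_num
  have ma : α₁ ∈ Set.Icc (0:ℝ) 1 := ⟨le_of_lt h1, by linarith⟩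
  have mb : α₂ ∈ Set.Icc (0:ℝ) 1 := ⟨by linarith, le_of_lt h2⟩
  exact ⟨t2_anti_Icc m0 ma h1, t2_anti_Icc ma mb h12, t2_anti_Icc mb m1 h2⟩
end

section
/- Let g(t) = t³ - (3/2)t² + (1/2)t, fix α* ∈ (0,1), and let t₂(α*) = (3 - α* - √((3-α*)(1+α*)/3))/4. Then D^α_{*0} g(t) ≥ 0 for all t ∈ [0, t₂(α*)] and all α ∈ (0, α*], yet g is not monotone on the interval [0, t₂(α*)]. -/
/-!
Writing `g'(s) = g'(t) + (3 - 6t)(t - s) + 3(t - s)²` and integrating against `(t - s)^(-α)`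
gives `D^α_{*0} g(t) = t^(1-α) · caputoQuad α t / Γ(4 - α)`, where
`caputoQuad α t = 6t² - 3(3 - α)t + (2 - α)(3 - α)/2` has smaller root `t₂(α)`.
For `t ≤ 1/2` this quadratic decreases in `α`, so for `α ≤ α*` and `t ∈ [0, t₂(α*)]` it is
at least `caputoQuad α* t ≥ 0`. Meanwhile `g'` vanishes at `(3 - √3)/6 = t₂(1) < t₂(α*)`,
so `g` increases and then strictly decreases on `[0, t₂(α*)]`.
-/

/-- The Caputo fractional derivative of order `α` with starting point `0`:
`D^α_{*0} g(t) = (1/Γ(1-α)) ∫_0^t (t-s)^(-α) g'(s) ds`. -/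
noncomputable def caputoDeriv0 (α : ℝ) (g : ℝ → ℝ) (t : ℝ) : ℝ :=
  (Real.Gamma (1 - α))⁻¹ * ∫ s in (0:ℝ)..t, (t - s) ^ (-α) * deriv g s

open Real Set

lemma integral_rpow_mul_quadratic {β : ℝ} (hβ : -1 < β) {t : ℝ} (ht : 0 ≤ t) (a b c : ℝ) :
    ∫ u in (0:ℝ)..t, u ^ β * (a + b * u + c * u ^ 2)
      = t ^ (β + 1) * (a / (β + 1) + b * t / (β + 2) + c * t ^ 2 / (β + 3)) := by
  have h1 : β + 1 ≠ 0 := by linarith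
  have h2 : β + 1 + 1 ≠ 0 := by linarith
  have h3 : β + 1 + 1 + 1 ≠ 0 := by linarith
  have hsplit : EqOn (fun u => u ^ β * (a + b * u + c * u ^ 2))
      (fun u => a * u ^ β + b * u ^ (β + 1) + c * u ^ (β + 1 + 1)) (uIcc 0 t) := by
    intro u hu
    rw [uIcc_of_le ht] at hu
    simp only [rpow_add_one' hu.1 h2, rpow_add_one' hu.1 h1]
    ring
  have hint : ∀ γ : ℝ, -1 < γ → IntervalIntegrable (fun u => u ^ γ) MeasureTheory.volume 0 t :=
    fun γ hγ => intervalIntegral.intervalIntegrable_rpow' hγ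
  have i0 := (hint β hβ).const_mul a
  have i1 := (hint (β + 1) (by linarith)).const_mul b
  have i2 := (hint (β + 1 + 1) (by linarith)).const_mul c
  rw [intervalIntegral.integral_congr hsplit, intervalIntegral.integral_add (i0.add i1) i2,
    intervalIntegral.integral_add i0 i1, intervalIntegral.integral_const_mul,
    intervalIntegral.integral_const_mul, intervalIntegral.integral_const_mul,
    integral_rpow (Or.inl hβ), integral_rpow (Or.inl (by linarith)),
    integral_rpow (Or.inl (by linarith)), zero_rpow h1, zero_rpow h2, zero_rpow h3,
    rpow_add_one' ht h3, rpow_add_one' ht h2]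
  ring

noncomputable def cubic (t : ℝ) : ℝ := t ^ 3 - (3 / 2) * t ^ 2 + (1 / 2) * t

lemma hasDerivAt_cubic (t : ℝ) : HasDerivAt cubic (3 * t ^ 2 - 3 * t + 1 / 2) t := by
  refine (((hasDerivAt_pow 3 t).sub ((hasDerivAt_pow 2 t).const_mul (3 / 2))).add
    ((hasDerivAt_id' t).const_mul (1 / 2))).congr_deriv ?_
  norm_num
  ring

noncomputable def caputoQuad (α t : ℝ) : ℝ := 6 * t ^ 2 - 3 * (3 - α) * t + (2 - α) * (3 - α) / 2

lemma Gamma_four_sub {α : ℝ} (hα : α < 1) :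
    Gamma (4 - α) = (3 - α) * (2 - α) * (1 - α) * Gamma (1 - α) := by
  rw [show 4 - α = (3 - α) + 1 by ring, Gamma_add_one (by linarith),
    show 3 - α = (2 - α) + 1 by ring, Gamma_add_one (by linarith),
    show 2 - α = (1 - α) + 1 by ring, Gamma_add_one (by linarith)]
  ring

lemma caputoDeriv0_cubic {α : ℝ} (hα : α < 1) {t : ℝ} (ht : 0 ≤ t) :
    caputoDeriv0 α cubic t = t ^ (1 - α) * caputoQuad α t / Gamma (4 - α) := by
  have htaylor : ∀ s, deriv cubic s
      = (3 * t ^ 2 - 3 * t + 1 / 2) + (3 - 6 * t) * (t - s) + 3 * (t - s) ^ 2 := fun s => by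
    rw [(hasDerivAt_cubic s).deriv]; ring
  have hsub := intervalIntegral.integral_comp_sub_left
    (fun u => u ^ (-α) * ((3 * t ^ 2 - 3 * t + 1 / 2) + (3 - 6 * t) * u + 3 * u ^ 2)) t
    (a := 0) (b := t)
  simp only [sub_self, sub_zero] at hsub
  unfold caputoDeriv0
  simp only [htaylor]
  rw [hsub, integral_rpow_mul_quadratic (by linarith) ht, Gamma_four_sub hα]
  simp only [neg_add_eq_sub]
  have h1 : 1 - α ≠ 0 := by linarith
  have h2 : 2 - α ≠ 0 := by linarith
  have h3 : 3 - α ≠ 0 := by linarith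
  field_simp
  unfold caputoQuad
  ring

lemma caputoQuad_nonneg_of_le_t2 {α t : ℝ} (hα₁ : -1 ≤ α) (hα₃ : α ≤ 3) (ht : t ≤ t2 α) :
    0 ≤ caputoQuad α t := by
  set r := √((3 - α) * (1 + α) / 3)
  have hr : 0 ≤ r := sqrt_nonneg _
  have hr2 : r ^ 2 = (3 - α) * (1 + α) / 3 := sq_sqrt (by nlinarith)
  have hfactor : caputoQuad α t = 6 * ((3 - α - r) / 4 - t) * ((3 - α + r) / 4 - t) := by
    unfold caputoQuad; linear_combination (3 / 8) * hr2
  rw [hfactor]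
  unfold t2 at ht
  apply mul_nonneg <;> [apply mul_nonneg; skip] <;> linarith

lemma caputoQuad_le_of_le {α β t : ℝ} (hαβ : α ≤ β) (hβ : β ≤ 1) (ht : t ≤ 1 / 2) :
    caputoQuad β t ≤ caputoQuad α t := by
  have : caputoQuad α t - caputoQuad β t = (β - α) * ((5 - α - β) / 2 - 3 * t) := by
    unfold caputoQuad; ring
  nlinarith

lemma t2_le_half {α : ℝ} (h0 : 0 ≤ α) (h1 : α ≤ 1) : t2 α ≤ 1 / 2 := by
  have : 1 - α ≤ √((3 - α) * (1 + α) / 3) := by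
    rw [le_sqrt (by linarith) (by nlinarith)]
    nlinarith
  unfold t2; linarith

lemma three_sub_sqrt_three_div_six_lt_t2 {α : ℝ} (h1 : α < 1) :
    (3 - √3) / 6 < t2 α := by
  have h3 : √3 ^ 2 = 3 := sq_sqrt (by norm_num)
  have h3pos : 0 < √3 := by positivity
  have : √((3 - α) * (1 + α) / 3) < 1 - α + 2 * √3 / 3 := by
    rw [sqrt_lt' (by nlinarith)]
    nlinarith [sq_nonneg (1 - α)]
  unfold t2
  nlinarith

lemma cubic_pos {t : ℝ} (h0 : 0 < t) (h1 : t < 1 / 2) : 0 < cubic t := by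
  have : cubic t = t * (1 / 2 - t) * (1 - t) := by unfold cubic; ring
  rw [this]
  apply mul_pos (mul_pos _ _) <;> linarith

lemma cubic_strictAntiOn : StrictAntiOn cubic (Icc ((3 - √3) / 6) (1 / 2)) := by
  have h3 : √3 ^ 2 = 3 := sq_sqrt (by norm_num)
  have h3pos : 0 < √3 := by positivity
  refine strictAntiOn_of_hasDerivWithinAt_neg (convex_Icc _ _)
    (fun x _ => (hasDerivAt_cubic x).continuousAt.continuousWithinAt)
    (fun x _ => (hasDerivAt_cubic x).hasDerivWithinAt) fun x hx => ?_
  rw [interior_Icc] at hx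
  have : 3 * x ^ 2 - 3 * x + 1 / 2 = 3 * (x - (3 - √3) / 6) * (x - (3 + √3) / 6) := by
    linear_combination (1 / 12) * h3
  rw [this]
  nlinarith [hx.1, hx.2]

lemma not_monotoneOn_or_antitoneOn {α β : Type*} [Preorder α] [LinearOrder β] {f : α → β}
    {s : Set α} {a b c : α} (ha : a ∈ s) (hb : b ∈ s) (hc : c ∈ s) (hab : a ≤ b) (hbc : b ≤ c)
    (hfab : f a < f b) (hfcb : f c < f b) : ¬(MonotoneOn f s ∨ AntitoneOn f s) := by
  rintro (hmono | hanti)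
  · exact (hmono hb hc hbc).not_gt hfcb
  · exact (hanti ha hb hab).not_gt hfab

theorem caputo_nonneg_but_not_monotone (g : ℝ → ℝ)
    (hg : ∀ t, g t = t ^ 3 - (3 / 2) * t ^ 2 + (1 / 2) * t)
    (αstar : ℝ) (hαstar : αstar ∈ Set.Ioo (0 : ℝ) 1) :
    (∀ t ∈ Set.Icc 0 (t2 αstar), ∀ α ∈ Set.Ioc 0 αstar,
      0 ≤ caputoDeriv0 α g t) ∧
    ¬ (MonotoneOn g (Set.Icc 0 (t2 αstar)) ∨
       AntitoneOn g (Set.Icc 0 (t2 αstar))) := by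
  obtain ⟨hαstar₀, hαstar₁⟩ := hαstar
  obtain rfl : g = cubic := funext hg
  have hhalf : t2 αstar ≤ 1 / 2 := t2_le_half hαstar₀.le hαstar₁.le
  have hcrit : (3 - √3) / 6 < t2 αstar := three_sub_sqrt_three_div_six_lt_t2 hαstar₁
  have hcrit_pos : 0 < (3 - √3) / 6 := by
    have : √3 < 3 := (sqrt_lt' (by norm_num)).mpr (by norm_num)
    linarith
  constructor
  · rintro t ⟨ht₀, ht⟩ α ⟨-, hα⟩
    rw [caputoDeriv0_cubic (hα.trans_lt hαstar₁) ht₀]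
    have hquad : 0 ≤ caputoQuad α t :=
      (caputoQuad_nonneg_of_le_t2 (by linarith) (by linarith) ht).trans
        (caputoQuad_le_of_le hα hαstar₁.le (ht.trans hhalf))
    have := Gamma_pos_of_pos (by linarith : 0 < 4 - α)
    positivity
  · refine not_monotoneOn_or_antitoneOn (f := cubic) (a := 0) ⟨le_rfl, by linarith⟩
      ⟨hcrit_pos.le, hcrit.le⟩ ⟨by linarith, le_rfl⟩ hcrit_pos.le hcrit.le ?_ ?_
    · rw [show cubic 0 = 0 by norm_num [cubic]]
      exact cubic_pos hcrit_pos (by linarith)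
    · exact cubic_strictAntiOn ⟨le_rfl, by linarith⟩ ⟨hcrit.le, hhalf⟩ hcrit
end
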